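/- For the Lorentzian 3D metric g₁ = k dx² + 2(2−c)e^{cx} dx dy + e^{2x} dz² with c ≠ 0, 2, the vector fields ∂_y, ∂_z, z∂_y + e^{(c−2)x}∂_z, and ∂_x − cy∂_y − z∂_z are Killing fields of g₁. -/

import Mathlib

noncomputable section

open scoped BigOperators

/-- Partial derivative of a scalar function on `ℝⁿ` in the `i`-th coordinate direction. -/
def pd {n : ℕ} (i : Fin n) (f : (Fin n → ℝ) → ℝ) (x : Fin n → ℝ) : ℝ :=
  fderiv ℝ f x (Pi.single i 1)

/-- The `m`-th coordinate of a point of `ℝⁿ` (junk value `0` if `m ≥ n`). -/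
def co {n : ℕ} (m : ℕ) (x : Fin n → ℝ) : ℝ :=
  if h : m < n then x ⟨m, h⟩ else 0

/-- Christoffel symbols `Γ^k_{ij} = ½ g^{kl}(∂_i g_{jl} + ∂_j g_{il} − ∂_l g_{ij})`
of a metric given as a matrix-valued function. -/
def christoffel {n : ℕ} (g : (Fin n → ℝ) → Matrix (Fin n) (Fin n) ℝ)
    (k i j : Fin n) (x : Fin n → ℝ) : ℝ :=
  (1/2) * ∑ l, (g x)⁻¹ k l *
    (pd i (fun y => g y j l) x + pd j (fun y => g y i l) x - pd l (fun y => g y i j) x)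

/-- Curvature tensor `R^i_{jkl}` of a torsion-free connection with Christoffel symbols `Γ`. -/
def curvature {n : ℕ} (Γ : Fin n → Fin n → Fin n → (Fin n → ℝ) → ℝ)
    (i j k l : Fin n) (x : Fin n → ℝ) : ℝ :=
  pd k (Γ i l j) x - pd l (Γ i k j) x +
    ∑ s, (Γ i k s x * Γ s l j x - Γ i l s x * Γ s k j x)

/-- Ricci tensor `Ric_{jl} = R^i_{jil}`. -/
def ricci {n : ℕ} (Γ : Fin n → Fin n → Fin n → (Fin n → ℝ) → ℝ)
    (j l : Fin n) (x : Fin n → ℝ) : ℝ :=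
  ∑ i, curvature Γ i j i l x

/-- Lie derivative `(L_v g)_{ij} = v^k ∂_k g_{ij} + g_{kj} ∂_i v^k + g_{ik} ∂_j v^k`. -/
def lieMetric {n : ℕ} (v : Fin n → (Fin n → ℝ) → ℝ)
    (g : (Fin n → ℝ) → Matrix (Fin n) (Fin n) ℝ) (i j : Fin n) (x : Fin n → ℝ) : ℝ :=
  ∑ k, (v k x * pd k (fun y => g y i j) x
        + g x k j * pd i (v k) x + g x i k * pd j (v k) x)

/-- Lie derivative `(L_v Γ)^k_{ij}` of a torsion-free connection along a vector field `v`. -/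
def lieConn {n : ℕ} (v : Fin n → (Fin n → ℝ) → ℝ)
    (Γ : Fin n → Fin n → Fin n → (Fin n → ℝ) → ℝ)
    (k i j : Fin n) (x : Fin n → ℝ) : ℝ :=
  pd i (fun y => pd j (v k) y) x +
    ∑ s, (v s x * pd s (Γ k i j) x + Γ k s j x * pd i (v s) x
          + Γ k i s x * pd j (v s) x - Γ s i j x * pd s (v k) x)

/-- A vector field with smooth components. -/
def SmoothVF {n : ℕ} (v : Fin n → (Fin n → ℝ) → ℝ) : Prop :=
  ∀ k, ContDiff ℝ (⊤ : ℕ∞) (v k)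

/-- `v` is a projective vector field of `g`: the Lie derivative of the Levi-Civita
connection along `v` is of the form `δ^k_i φ_j + δ^k_j φ_i` for some 1-form `φ`
(the standard characterization of projective fields). -/
def IsProjectiveField {n : ℕ} (g : (Fin n → ℝ) → Matrix (Fin n) (Fin n) ℝ)
    (v : Fin n → (Fin n → ℝ) → ℝ) : Prop :=
  ∃ φ : Fin n → (Fin n → ℝ) → ℝ, ∀ k i j x,
    lieConn v (christoffel g) k i j x =
      (if k = i then φ j x else 0) + (if k = j then φ i x else 0)

/-- The set of (smooth) projective vector fields of `g`: the projective algebra `𝔭(g)`. -/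
def ProjSet {n : ℕ} (g : (Fin n → ℝ) → Matrix (Fin n) (Fin n) ℝ) :
    Set (Fin n → (Fin n → ℝ) → ℝ) :=
  {v | SmoothVF v ∧ IsProjectiveField g v}

/-- The set of (smooth) Killing fields of `g`: the isometry algebra `I(g)`. -/
def KillSet {n : ℕ} (g : (Fin n → ℝ) → Matrix (Fin n) (Fin n) ℝ) :
    Set (Fin n → (Fin n → ℝ) → ℝ) :=
  {v | SmoothVF v ∧ ∀ i j x, lieMetric v g i j x = 0}

/-- The set of (smooth) homothety fields of `g` (`L_v g = λ·g`, `λ` constant):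
the homothety algebra `H(g)`. -/
def HomSet {n : ℕ} (g : (Fin n → ℝ) → Matrix (Fin n) (Fin n) ℝ) :
    Set (Fin n → (Fin n → ℝ) → ℝ) :=
  {v | SmoothVF v ∧ ∃ c : ℝ, ∀ i j x, lieMetric v g i j x = c * g x i j}

/-- Kručkovič's 3D Lorentzian metric
`g₁ = k dx² + 2(2−c)e^{cx} dx dy + e^{2x} dz²` in coordinates `(x,y,z)`. -/
def gKr (k c : ℝ) (x : Fin 3 → ℝ) : Matrix (Fin 3) (Fin 3) ℝ := fun i j =>
  if i = 0 ∧ j = 0 then k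
  else if (i = 0 ∧ j = 1) ∨ (i = 1 ∧ j = 0) then (2 - c) * Real.exp (c * x 0)
  else if i = 2 ∧ j = 2 then Real.exp (2 * x 0)
  else 0

lemma pd_hasF {n : ℕ} {f : (Fin n → ℝ) → ℝ} {x} {L : (Fin n → ℝ) →L[ℝ] ℝ}
    (h : HasFDerivAt f L x) (i : Fin n) : pd i f x = L (Pi.single i 1) := by
  rw [pd, h.fderiv]

lemma pd_const {n : ℕ} (i : Fin n) (a : ℝ) (x) : pd i (fun _ => a) x = 0 := by
  simp [pd]

lemma hasF_coord {n : ℕ} (m : Fin n) (x : Fin n → ℝ) :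
    HasFDerivAt (fun y : Fin n → ℝ => y m) ((ContinuousLinearMap.proj m : (Fin n → ℝ) →L[ℝ] ℝ)) x :=
  (ContinuousLinearMap.proj m : (Fin n → ℝ) →L[ℝ] ℝ).hasFDerivAt

lemma pd_coord {n : ℕ} (i m : Fin n) (x) :
    pd i (fun y => y m) x = if i = m then 1 else 0 := by
  rw [pd_hasF (hasF_coord m x)]
  simp [ContinuousLinearMap.proj_apply, Pi.single_apply, eq_comm]

lemma pd_cmul_coord {n : ℕ} (b : ℝ) (i m : Fin n) (x) :
    pd i (fun y => b * y m) x = if i = m then b else 0 := by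
  rw [pd_hasF ((hasF_coord m x).const_mul b)]
  simp [Pi.single_apply, eq_comm]

lemma pd_neg_coord {n : ℕ} (i m : Fin n) (x) :
    pd i (fun y => -(y m)) x = if i = m then -1 else 0 := by
  rw [pd_hasF (f := fun y => -(y m)) (hasF_coord m x).neg]
  simp [Pi.single_apply, eq_comm]
  split <;> norm_num

lemma hasF_cexp {n : ℕ} (b a : ℝ) (m : Fin n) (x : Fin n → ℝ) :
    HasFDerivAt (fun y : Fin n → ℝ => b * Real.exp (a * y m))
      ((b * (a * Real.exp (a * x m))) • (ContinuousLinearMap.proj m : (Fin n → ℝ) →L[ℝ] ℝ)) x := by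
  have h := (((hasF_coord m x).const_mul a).exp).const_mul b
  refine h.congr_fderiv ?_
  rw [smul_smul, smul_smul]
  congr 1
  ring

lemma pd_cexp {n : ℕ} (b a : ℝ) (i m : Fin n) (x) :
    pd i (fun y => b * Real.exp (a * y m)) x
      = if i = m then b * (a * Real.exp (a * x m)) else 0 := by
  rw [pd_hasF (hasF_cexp b a m x)]
  simp [Pi.single_apply, eq_comm]

lemma pd_exp {n : ℕ} (a : ℝ) (i m : Fin n) (x) :
    pd i (fun y => Real.exp (a * y m)) x
      = if i = m then a * Real.exp (a * x m) else 0 := by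
  have := pd_cexp 1 a i m x
  simpa using this

lemma pd_neg_cmul {n : ℕ} (b : ℝ) (i m : Fin n) (x) :
    pd i (fun y => -(b * y m)) x = if i = m then -b else 0 := by
  rw [pd_hasF (f := fun y => -(b * y m)) ((hasF_coord m x).const_mul b).neg]
  simp [Pi.single_apply, eq_comm]
  split <;> norm_num

@[simp] lemma gKr_00 (k c : ℝ) (y) : gKr k c y 0 0 = k := rfl
@[simp] lemma gKr_01 (k c : ℝ) (y) : gKr k c y 0 1 = (2 - c) * Real.exp (c * y 0) := rfl
@[simp] lemma gKr_10 (k c : ℝ) (y) : gKr k c y 1 0 = (2 - c) * Real.exp (c * y 0) := rfl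
@[simp] lemma gKr_02 (k c : ℝ) (y) : gKr k c y 0 2 = 0 := rfl
@[simp] lemma gKr_20 (k c : ℝ) (y) : gKr k c y 2 0 = 0 := rfl
@[simp] lemma gKr_11 (k c : ℝ) (y) : gKr k c y 1 1 = 0 := rfl
@[simp] lemma gKr_12 (k c : ℝ) (y) : gKr k c y 1 2 = 0 := rfl
@[simp] lemma gKr_21 (k c : ℝ) (y) : gKr k c y 2 1 = 0 := rfl
@[simp] lemma gKr_22 (k c : ℝ) (y) : gKr k c y 2 2 = Real.exp (2 * y 0) := rfl


/-- for `g₁ = k dx² + 2(2−c)e^{cx} dx dy + e^{2x} dz²` (`c ≠ 0,2`),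
the fields `∂_y`, `∂_z`, `z∂_y + e^{(c−2)x}∂_z` and `∂_x − cy∂_y − z∂_z`
are Killing fields. -/
theorem gKr_killing_fields (k c : ℝ) (hc0 : c ≠ 0) (hc2 : c ≠ 2) :
    ∀ v ∈ ({
      fun (m : Fin 3) (_ : Fin 3 → ℝ) => if m = 1 then (1:ℝ) else 0,
      fun (m : Fin 3) (_ : Fin 3 → ℝ) => if m = 2 then (1:ℝ) else 0,
      fun (m : Fin 3) (x : Fin 3 → ℝ) =>
        if m = 1 then x 2 else if m = 2 then Real.exp ((c - 2) * x 0) else 0,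
      fun (m : Fin 3) (x : Fin 3 → ℝ) =>
        if m = 0 then (1:ℝ) else if m = 1 then -c * x 1 else -(x 2)} :
      Set (Fin 3 → (Fin 3 → ℝ) → ℝ)),
    ∀ (i j : Fin 3) (x : Fin 3 → ℝ), lieMetric v (gKr k c) i j x = 0 := by
  intro v hv
  simp only [Set.mem_insert_iff, Set.mem_singleton_iff] at hv
  rcases hv with rfl | rfl | rfl | rfl <;>
    intro i j x <;> fin_cases i <;> fin_cases j <;>
    simp [lieMetric, Fin.sum_univ_three, pd_const, pd_coord, pd_cmul_coord,
      pd_neg_coord, pd_neg_cmul, pd_cexp, pd_exp, ← Real.exp_add] <;> ring_nf <;>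
    simp [← Real.exp_add] <;> rw [mul_assoc, ← Real.exp_add] <;> ring_nf
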